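/- Specialist Hedge regret bound: Run the Specialist Hedge algorithm with learning rate η > 0 and initial probability distribution p₁ on a finite specialist set E. On each trial τ = 1..T, a nonempty awake set W^τ ⊆ E is revealed, the algorithm plays v^τ(k) = p_τ(k)/p_τ(W^τ) on W^τ, receives costs c^τ : W^τ → [0,1], and updates p_{τ+1} by multiplicatively reweighting awake specialists (with renormalization preserving total mass). Then for any probability distribution u on E (with u absolutely continuous w.r.t. p₁), setting u(W^τ) := Σ_{k∈W^τ} u(k) and ū^τ(k) := u(k)/u(W^τ): Σ_{τ=1}^T u(W^τ)·⟨v^τ − ū^τ, c^τ⟩ ≤ (1/η)·D(u‖p₁) + (η/2)·Σ_{τ=1}^T u(W^τ). -/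

import Mathlib

open scoped BigOperators

noncomputable def relEnt {E : Type*} [Fintype E] (a b : E → ℝ) : ℝ :=
  ∑ k, a k * Real.log (a k / b k)

/-!
The relative entropy `D(u‖p_τ)` serves as a potential. Since the update only reweights awake
specialists, `D(u‖p_τ) - D(u‖p_{τ+1}) = -η Σ_{k ∈ W} u(k) c(k) + u(W) log (p_τ(W) / Z_τ)`, where
`Z_τ` is the reweighted mass of `W`. From `e^{-x} ≤ 1 - x + x²/2` and `log y ≤ y - 1` one gets
`log (p_τ(W) / Z_τ) ≥ η ⟨v^τ, c^τ⟩ - η²/2`, so the regret of each trial is at most the drop of the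
potential divided by `η`, plus `η u(W) / 2`. Summing telescopes; the final potential is
nonnegative by Gibbs' inequality, because the update preserves total mass.
-/

open Real Finset

theorem Real.exp_neg_le_one_sub_add_sq_div_two {x : ℝ} (hx : 0 ≤ x) :
    exp (-x) ≤ 1 - x + x ^ 2 / 2 := by
  have hquad : 0 < 1 - x + x ^ 2 / 2 := by nlinarith [sq_nonneg (x - 1)]
  rw [exp_neg, inv_le_iff_one_le_mul₀ (exp_pos x)]
  nlinarith [mul_le_mul_of_nonneg_right (quadratic_le_exp_of_nonneg hx) hquad.le, pow_nonneg hx 4]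

theorem Real.sub_le_mul_log_div {a b : ℝ} (ha : 0 ≤ a) (hb : 0 < b) :
    a - b ≤ a * log (a / b) := by
  have h := mul_le_mul_of_nonneg_left (self_sub_one_le_mul_log (div_nonneg ha hb.le)) hb.le
  rwa [mul_sub, mul_div_cancel₀ _ hb.ne', mul_one, ← mul_assoc, mul_div_cancel₀ _ hb.ne'] at h

theorem Real.mul_log_div_sub_mul_log_div_mul_exp (a : ℝ) {b : ℝ} (hb : b ≠ 0) (t : ℝ) :
    a * log (a / b) - a * log (a / (b * exp t)) = a * t := by
  rcases eq_or_ne a 0 with rfl | ha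
  · simp
  rw [← div_div, log_div (div_ne_zero ha hb) (exp_ne_zero t), log_exp]
  ring

theorem Real.log_sum_mul_exp_le {ι : Type*} {s : Finset ι} {w c : ι → ℝ} {η : ℝ} (hη : 0 ≤ η)
    (hw : ∀ k ∈ s, 0 ≤ w k) (hw_sum : ∑ k ∈ s, w k = 1)
    (hc : ∀ k ∈ s, 0 ≤ c k ∧ c k ≤ 1) :
    log (∑ k ∈ s, w k * exp (-η * c k)) ≤ -η * ∑ k ∈ s, w k * c k + η ^ 2 / 2 := by
  have hexp : ∀ k ∈ s, exp (-η * c k) ≤ 1 - η * c k + η ^ 2 / 2 := fun k hk => by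
    obtain ⟨hc0, hc1⟩ := hc k hk
    have hηc : η * c k ≤ η := mul_le_of_le_one_right hη hc1
    calc exp (-η * c k) ≤ 1 - η * c k + (η * c k) ^ 2 / 2 := by
          simpa only [neg_mul] using exp_neg_le_one_sub_add_sq_div_two (mul_nonneg hη hc0)
      _ ≤ 1 - η * c k + η ^ 2 / 2 := by gcongr
  have hZ : 0 < ∑ k ∈ s, w k * exp (-η * c k) := by
    refine (exp_pos (-η)).trans_le ?_
    calc exp (-η) = ∑ k ∈ s, w k * exp (-η) := by rw [← sum_mul, hw_sum, one_mul]
      _ ≤ ∑ k ∈ s, w k * exp (-η * c k) := sum_le_sum fun k hk => by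
          gcongr
          · exact hw k hk
          · nlinarith [(hc k hk).2]
  calc log (∑ k ∈ s, w k * exp (-η * c k)) ≤ ∑ k ∈ s, w k * exp (-η * c k) - 1 :=
        log_le_sub_one_of_pos hZ
    _ ≤ ∑ k ∈ s, w k * (1 - η * c k + η ^ 2 / 2) - 1 := by
        gcongr with k hk
        · exact hw k hk
        · exact hexp k hk
    _ = -η * ∑ k ∈ s, w k * c k + η ^ 2 / 2 := by
        have hsplit : ∑ k ∈ s, w k * (1 - η * c k + η ^ 2 / 2)
            = (1 + η ^ 2 / 2) * ∑ k ∈ s, w k - η * ∑ k ∈ s, w k * c k := by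
          rw [mul_sum, mul_sum, ← sum_sub_distrib]
          exact sum_congr rfl fun k _ => by ring
        rw [hsplit, hw_sum]
        ring

theorem relEnt_nonneg {E : Type*} [Fintype E] {u q : E → ℝ} (hu : ∀ k, 0 ≤ u k)
    (hq : ∀ k, 0 < q k) (hmass : ∑ k, q k ≤ ∑ k, u k) : 0 ≤ relEnt u q :=
  calc 0 ≤ ∑ k, (u k - q k) := by rw [sum_sub_distrib]; linarith
    _ ≤ relEnt u q := sum_le_sum fun k _ => sub_le_mul_log_div (hu k) (hq k)

theorem Real.le_log_sum_div_sum_mul_exp {ι : Type*} {W : Finset ι} {c q : ι → ℝ} {η : ℝ}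
    (hη : 0 ≤ η) (hq : ∀ k ∈ W, 0 < q k) (hW : W.Nonempty) (hc : ∀ k ∈ W, 0 ≤ c k ∧ c k ≤ 1) :
    η * ∑ k ∈ W, q k / (∑ k' ∈ W, q k') * c k - η ^ 2 / 2 ≤
      log ((∑ k ∈ W, q k) / ∑ k ∈ W, q k * exp (-η * c k)) := by
  set P := ∑ k ∈ W, q k
  have hP : 0 < P := sum_pos hq hW
  have hmix : (∑ k ∈ W, q k * exp (-η * c k)) / P = ∑ k ∈ W, q k / P * exp (-η * c k) := by
    rw [sum_div]
    exact sum_congr rfl fun k _ => by ring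
  have hw_sum : ∑ k ∈ W, q k / P = 1 := by rw [← sum_div, div_self hP.ne']
  have := log_sum_mul_exp_le hη (fun k hk => (div_pos (hq k hk) hP).le) hw_sum hc
  rw [← hmix, ← inv_div, log_inv] at this
  linarith

section SpecialistHedge

variable {E : Type*} [DecidableEq E]

noncomputable def hedgeUpdate (η : ℝ) (W : Finset E) (c q : E → ℝ) (k : E) : ℝ :=
  if k ∈ W then
    q k * Real.exp (-η * c k) * (∑ k' ∈ W, q k') / (∑ k' ∈ W, q k' * Real.exp (-η * c k'))
  else q k

variable {η : ℝ} {W : Finset E} {c q : E → ℝ}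

theorem hedgeUpdate_empty : hedgeUpdate η ∅ c q = q :=
  funext fun k => if_neg (notMem_empty k)

theorem hedgeUpdate_of_mem (hq : ∀ k, 0 < q k) {k : E} (hk : k ∈ W) :
    hedgeUpdate η W c q k =
      q k * exp (-η * c k + log ((∑ k' ∈ W, q k') / ∑ k' ∈ W, q k' * exp (-η * c k'))) := by
  have hP : 0 < ∑ k' ∈ W, q k' := sum_pos (fun k' _ => hq k') ⟨k, hk⟩
  have hZ : 0 < ∑ k' ∈ W, q k' * exp (-η * c k') :=
    sum_pos (fun k' _ => mul_pos (hq k') (exp_pos _)) ⟨k, hk⟩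
  rw [hedgeUpdate, if_pos hk, exp_add, exp_log (div_pos hP hZ)]
  ring

theorem hedgeUpdate_pos (hq : ∀ k, 0 < q k) (k : E) : 0 < hedgeUpdate η W c q k := by
  by_cases hk : k ∈ W
  · rw [hedgeUpdate_of_mem hq hk]
    exact mul_pos (hq k) (exp_pos _)
  · rw [hedgeUpdate, if_neg hk]
    exact hq k

theorem sum_hedgeUpdate [Fintype E] (hq : ∀ k, 0 < q k) :
    ∑ k, hedgeUpdate η W c q k = ∑ k, q k := by
  rcases W.eq_empty_or_nonempty with rfl | hW
  · rw [hedgeUpdate_empty]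
  have hZ : 0 < ∑ k ∈ W, q k * exp (-η * c k) := sum_pos (fun k _ => mul_pos (hq k) (exp_pos _)) hW
  rw [← sum_add_sum_compl W, ← sum_add_sum_compl W q]
  congr 1
  · rw [sum_congr rfl fun k hk => by rw [hedgeUpdate, if_pos hk], ← sum_div, ← sum_mul,
      mul_div_cancel_left₀ _ hZ.ne']
  · exact sum_congr rfl fun k hk => by rw [hedgeUpdate, if_neg (mem_compl.1 hk)]

theorem relEnt_sub_relEnt_hedgeUpdate [Fintype E] (u : E → ℝ) (hq : ∀ k, 0 < q k) :
    relEnt u q - relEnt u (hedgeUpdate η W c q) =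
      ∑ k ∈ W, u k * (-η * c k + log ((∑ k' ∈ W, q k') / ∑ k' ∈ W, q k' * exp (-η * c k'))) := by
  rw [relEnt, relEnt, ← sum_sub_distrib, ← sum_subset (subset_univ W)]
  · exact sum_congr rfl fun k hk => by
      rw [hedgeUpdate_of_mem hq hk, mul_log_div_sub_mul_log_div_mul_exp _ (hq k).ne']
  · intro k _ hk
    rw [hedgeUpdate, if_neg hk, sub_self]

theorem hedge_trial_regret_le [Fintype E] (hη : 0 < η) (hc : ∀ k ∈ W, 0 ≤ c k ∧ c k ≤ 1)
    (hq : ∀ k, 0 < q k) {u : E → ℝ} (hu : ∀ k, 0 ≤ u k) :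
    (∑ k ∈ W, u k) * ∑ k ∈ W, (q k / (∑ k' ∈ W, q k') - u k / (∑ k' ∈ W, u k')) * c k ≤
      (1 / η) * (relEnt u q - relEnt u (hedgeUpdate η W c q)) + (η / 2) * ∑ k ∈ W, u k := by
  rcases W.eq_empty_or_nonempty with rfl | hW
  · simp [hedgeUpdate_empty]
  set uW := ∑ k ∈ W, u k
  set S := ∑ k ∈ W, q k / (∑ k' ∈ W, q k') * c k
  set A := ∑ k ∈ W, u k * c k
  set L := log ((∑ k ∈ W, q k) / ∑ k ∈ W, q k * exp (-η * c k))
  have huW : 0 ≤ uW := sum_nonneg fun k _ => hu k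
  have hregret : uW * ∑ k ∈ W, (q k / (∑ k' ∈ W, q k') - u k / uW) * c k = uW * S - A := by
    -- guards against the junk value `u k / 0 = 0`: if `u(W) = 0` then `u` vanishes on `W`
    have hA : uW = 0 → A = 0 := fun h0 => sum_eq_zero fun k hk => by
      rw [(sum_eq_zero_iff_of_nonneg fun k _ => hu k).1 h0 k hk, zero_mul]
    have hmix : ∑ k ∈ W, (q k / (∑ k' ∈ W, q k') - u k / uW) * c k = S - A / uW := by
      rw [sum_div, ← sum_sub_distrib]
      exact sum_congr rfl fun k _ => by ring
    rw [hmix, mul_sub, mul_div_cancel_of_imp' hA]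
  have hdrop : relEnt u q - relEnt u (hedgeUpdate η W c q) = -η * A + uW * L := by
    rw [relEnt_sub_relEnt_hedgeUpdate u hq, mul_sum, sum_mul, ← sum_add_distrib]
    exact sum_congr rfl fun k _ => by ring
  have hL : uW * (η * S - η ^ 2 / 2) ≤ uW * L :=
    mul_le_mul_of_nonneg_left (le_log_sum_div_sum_mul_exp hη.le (fun k _ => hq k) hW hc) huW
  have hscale : (1 / η) * (-η * A + uW * L) = -A + uW * L / η := by field_simp
  have hL' : uW * S - η / 2 * uW ≤ uW * L / η := by
    rw [le_div_iff₀ hη]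
    linarith
  rw [hregret, hdrop, hscale]
  linarith

end SpecialistHedge

theorem specialist_hedge_regret_general {E : Type*} [Fintype E] [DecidableEq E]
    (η : ℝ) (hη : 0 < η) (T : ℕ)
    (W : ℕ → Finset E)
    (c : ℕ → E → ℝ) (hc : ∀ τ, ∀ k ∈ W τ, 0 ≤ c τ k ∧ c τ k ≤ 1)
    (p : ℕ → E → ℝ)
    (hp0_pos : ∀ k, 0 < p 0 k) (hp0_sum : ∑ k, p 0 k = 1)
    (hupdate : ∀ τ k, p (τ + 1) k = if k ∈ W τ then
        p τ k * Real.exp (-η * c τ k) * (∑ k' ∈ W τ, p τ k') /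
          (∑ k' ∈ W τ, p τ k' * Real.exp (-η * c τ k'))
      else p τ k)
    (u : E → ℝ) (hu_nonneg : ∀ k, 0 ≤ u k) (hu_sum : ∑ k, u k = 1) :
    ∑ τ ∈ Finset.range T,
        (∑ k ∈ W τ, u k) *
          ∑ k ∈ W τ, (p τ k / (∑ k' ∈ W τ, p τ k') - u k / (∑ k' ∈ W τ, u k')) * c τ k
      ≤ (1 / η) * relEnt u (p 0) + (η / 2) * ∑ τ ∈ Finset.range T, ∑ k ∈ W τ, u k := by
  have hstep : ∀ τ, p (τ + 1) = hedgeUpdate η (W τ) (c τ) (p τ) := fun τ => funext (hupdate τ)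
  have hpos : ∀ τ k, 0 < p τ k := by
    intro τ
    induction τ with
    | zero => exact hp0_pos
    | succ τ ih => rw [hstep]; exact hedgeUpdate_pos ih
  have hmass : ∀ τ, ∑ k, p τ k = 1 := by
    intro τ
    induction τ with
    | zero => exact hp0_sum
    | succ τ ih => rw [hstep, sum_hedgeUpdate (hpos τ), ih]
  have hfinal : 0 ≤ relEnt u (p T) := relEnt_nonneg hu_nonneg (hpos T) (by rw [hmass, hu_sum])
  calc _ ≤ ∑ τ ∈ range T, ((1 / η) * (relEnt u (p τ) - relEnt u (p (τ + 1))) +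
          (η / 2) * ∑ k ∈ W τ, u k) :=
        sum_le_sum fun τ _ => by rw [hstep]; exact hedge_trial_regret_le hη (hc τ) (hpos τ) hu_nonneg
    _ = (1 / η) * (relEnt u (p 0) - relEnt u (p T)) +
          (η / 2) * ∑ τ ∈ range T, ∑ k ∈ W τ, u k := by
        rw [sum_add_distrib, ← mul_sum, ← mul_sum, sum_range_sub']
    _ ≤ _ := by gcongr; linarith

/-- Specialist Hedge regret bound (Theorem `allospecth`). -/
theorem specialist_hedge_regret {E : Type*} [Fintype E] [DecidableEq E]
    (η : ℝ) (hη : 0 < η) (T : ℕ)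
    (W : ℕ → Finset E) (hW : ∀ τ, (W τ).Nonempty)
    (c : ℕ → E → ℝ) (hc : ∀ τ, ∀ k ∈ W τ, 0 ≤ c τ k ∧ c τ k ≤ 1)
    (p : ℕ → E → ℝ)
    (hp0_pos : ∀ k, 0 < p 0 k) (hp0_sum : ∑ k, p 0 k = 1)
    (hupdate : ∀ τ k, p (τ + 1) k = if k ∈ W τ then
        p τ k * Real.exp (-η * c τ k) * (∑ k' ∈ W τ, p τ k') /
          (∑ k' ∈ W τ, p τ k' * Real.exp (-η * c τ k'))
      else p τ k)
    (u : E → ℝ) (hu_nonneg : ∀ k, 0 ≤ u k) (hu_sum : ∑ k, u k = 1)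
    (hu_ac : ∀ k, p 0 k = 0 → u k = 0)
    (huW : ∀ τ, τ < T → 0 < ∑ k ∈ W τ, u k) :
    ∑ τ ∈ Finset.range T,
        (∑ k ∈ W τ, u k) *
          ∑ k ∈ W τ, (p τ k / (∑ k' ∈ W τ, p τ k') - u k / (∑ k' ∈ W τ, u k')) * c τ k
      ≤ (1 / η) * relEnt u (p 0) + (η / 2) * ∑ τ ∈ Finset.range T, ∑ k ∈ W τ, u k :=
  specialist_hedge_regret_general η hη T W c hc p hp0_pos hp0_sum hupdate u hu_nonneg hu_sum
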